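/- Let r ≥ 2 and k ≥ 1, and set m = (r−1)k and N = (rk+1)(r−1). Let h : C → ℝ^k be a continuous map on the colorful subcomplex C such that the map f : C → σ^m × ℝ^k defined by f(x) = (p(x), h(x)) has no r-Tverberg point. Then the S_r-equivariant continuous map h̃ : X → (ℝ^k)^r defined by h̃(x_1,…,x_r) = (h(x_1),…,h(x_r)) avoids the thin diagonal {(z,…,z) : z ∈ ℝ^k}; consequently, there exists an S_r-equivariant continuous map X → S^{m−1}. -/

import Mathlib

/-! If `h(x_1) = ⋯ = h(x_r)` for some `(x_1, …, x_r) ∈ X`, then, since the `p(x_i)` agree as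
well, the common value of the `f(x_i)` is an `r`-Tverberg point of `f = (p, h)`. Hence `h̃` misses
the thin diagonal, i.e. the centred tuple `h(x_i) - (1/r) Σ_j h(x_j)` never vanishes on `X`. It
lies in the complement `{Σ z_i = 0}` of the diagonal, and its radial projection to the unit sphere
is a continuous map `X → S^{m-1}`, equivariant because centring and normalising commute with
permutations of the blocks. -/

open Set

noncomputable section

/-- The colorful subcomplex `C ⊆ σ^N`: points of the standard simplex on the vertex set
`Fin r × Fin (m+1)` using at most one vertex from each color class `C_j`. -/
def colorfulComplex (r m : ℕ) : Set ((Fin r × Fin (m + 1)) → ℝ) :=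
  {x | x ∈ stdSimplex ℝ (Fin r × Fin (m + 1)) ∧
    ∀ (j : Fin (m + 1)) (i i' : Fin r), 0 < x (i, j) → 0 < x (i', j) → i = i'}

/-- The projection `p : σ^N → σ^m`, `p(x)_j = Σ_i x(i,j)`. -/
def simplexProj (r m : ℕ) (x : (Fin r × Fin (m + 1)) → ℝ) : Fin (m + 1) → ℝ :=
  fun j => ∑ i, x (i, j)

/-- The deleted fiber product `X` of the colorful subcomplex: `r`-tuples of points of `C`
with pairwise disjoint supports and equal projections. -/
def deletedFiberProd (r m : ℕ) : Set (Fin r → ((Fin r × Fin (m + 1)) → ℝ)) :=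
  {x | (∀ i, x i ∈ colorfulComplex r m) ∧
    (Pairwise fun i i' => Disjoint {v | 0 < x i v} {v | 0 < x i' v}) ∧
    (∀ i i', simplexProj r m (x i) = simplexProj r m (x i'))}

/-- The sphere `S^{m-1} = {(z_1,…,z_r) ∈ (ℝ^k)^r : Σ z_i = 0, Σ ‖z_i‖² = 1}`. -/
def blockSphere (k r : ℕ) : Set (Fin r → EuclideanSpace ℝ (Fin k)) :=
  {z | (∑ i, z i) = 0 ∧ (∑ i, ‖z i‖ ^ 2) = 1}

section Pi

variable {ι E : Type*} [Fintype ι] [NormedAddCommGroup E]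

theorem sum_norm_sq_pos {w : ι → E} (hw : w ≠ 0) : 0 < ∑ i, ‖w i‖ ^ 2 := by
  obtain ⟨i, hi⟩ := Function.ne_iff.mp hw
  exact Finset.sum_pos' (fun j _ => by positivity) ⟨i, Finset.mem_univ i, by positivity⟩

variable [NormedSpace ℝ E]

def centered (v : ι → E) : ι → E :=
  fun i => v i - (Fintype.card ι : ℝ)⁻¹ • ∑ j, v j

theorem sum_centered (v : ι → E) : ∑ i, centered v i = 0 := by
  rcases isEmpty_or_nonempty ι with hι | hι
  · simp
  simp only [centered, Finset.sum_sub_distrib, Finset.sum_const, Finset.card_univ,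
    ← Nat.cast_smul_eq_nsmul ℝ, smul_smul]
  rw [mul_inv_cancel₀ (by positivity), one_smul, sub_self]

theorem exists_eq_const_of_centered_eq_zero {v : ι → E} (hv : centered v = 0) :
    ∃ z, ∀ i, v i = z :=
  ⟨_, fun i => sub_eq_zero.mp (congrFun hv i)⟩

theorem centered_comp_perm (v : ι → E) (π : Equiv.Perm ι) :
    centered (v ∘ π) = centered v ∘ π := by
  funext i
  simp only [centered, Function.comp_apply, Equiv.sum_comp π v]

theorem continuous_centered : Continuous (centered : (ι → E) → ι → E) := by
  unfold centered
  fun_prop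

def l2Normalize (w : ι → E) : ι → E :=
  (√(∑ i, ‖w i‖ ^ 2))⁻¹ • w

theorem sum_norm_sq_l2Normalize {w : ι → E} (hw : w ≠ 0) :
    ∑ i, ‖l2Normalize w i‖ ^ 2 = 1 := by
  have hpos := sum_norm_sq_pos hw
  simp only [l2Normalize, Pi.smul_apply, norm_smul, mul_pow, norm_inv, Real.norm_eq_abs,
    abs_of_nonneg (Real.sqrt_nonneg _), inv_pow, Real.sq_sqrt hpos.le, ← Finset.mul_sum]
  exact inv_mul_cancel₀ hpos.ne'

theorem sum_l2Normalize_eq_zero {w : ι → E} (hw : ∑ i, w i = 0) :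
    ∑ i, l2Normalize w i = 0 := by
  simp only [l2Normalize, Pi.smul_apply, ← Finset.smul_sum, hw, smul_zero]

theorem l2Normalize_comp_perm (w : ι → E) (π : Equiv.Perm ι) :
    l2Normalize (w ∘ π) = l2Normalize w ∘ π := by
  funext i
  simp only [l2Normalize, Pi.smul_apply, Function.comp_apply,
    Equiv.sum_comp π fun j => ‖w j‖ ^ 2]

theorem continuousOn_l2Normalize :
    ContinuousOn (l2Normalize : (ι → E) → ι → E) {w | w ≠ 0} := by
  have hsqrt : Continuous fun w : ι → E => √(∑ i, ‖w i‖ ^ 2) := by fun_prop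
  exact (hsqrt.continuousOn.inv₀ fun w hw => (Real.sqrt_pos.mpr (sum_norm_sq_pos hw)).ne').smul
    continuousOn_id

end Pi

theorem not_exists_eq_const_of_not_tverberg (r m k : ℕ)
    (h : ((Fin r × Fin (m + 1)) → ℝ) → EuclideanSpace ℝ (Fin k))
    (hT : ¬ ∃ x : Fin r → ((Fin r × Fin (m + 1)) → ℝ),
        (∀ i, x i ∈ colorfulComplex r m) ∧
        (Pairwise fun i j => Disjoint {v | 0 < x i v} {v | 0 < x j v}) ∧
        (∀ i j, (simplexProj r m (x i), h (x i)) = (simplexProj r m (x j), h (x j))))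
    {x : Fin r → ((Fin r × Fin (m + 1)) → ℝ)} (hx : x ∈ deletedFiberProd r m) :
    ¬ ∃ z : EuclideanSpace ℝ (Fin k), ∀ i, h (x i) = z := by
  rintro ⟨z, hz⟩
  exact hT ⟨x, hx.1, hx.2.1, fun i j => Prod.ext (hx.2.2 i j) ((hz i).trans (hz j).symm)⟩

theorem statement7_general (r k : ℕ)
    (m : ℕ)
    (h : ((Fin r × Fin (m + 1)) → ℝ) → EuclideanSpace ℝ (Fin k))
    (hcont : ContinuousOn h (colorfulComplex r m))
    (hT : ¬ ∃ x : Fin r → ((Fin r × Fin (m + 1)) → ℝ),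
        (∀ i, x i ∈ colorfulComplex r m) ∧
        (Pairwise fun i j => Disjoint {v | 0 < x i v} {v | 0 < x j v}) ∧
        (∀ i j, (simplexProj r m (x i), h (x i)) = (simplexProj r m (x j), h (x j)))) :
    (∀ x ∈ deletedFiberProd r m,
        ¬ ∃ z : EuclideanSpace ℝ (Fin k), ∀ i, h (x i) = z) ∧
    (∃ F : (Fin r → ((Fin r × Fin (m + 1)) → ℝ)) → (Fin r → EuclideanSpace ℝ (Fin k)),
      ContinuousOn F (deletedFiberProd r m) ∧
      MapsTo F (deletedFiberProd r m) (blockSphere k r) ∧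
      ∀ x ∈ deletedFiberProd r m, ∀ π : Equiv.Perm (Fin r),
        F (fun i => x (π i)) = fun i => F x (π i)) := by
  have hdiag := fun x (hx : x ∈ deletedFiberProd r m) =>
    not_exists_eq_const_of_not_tverberg r m k h hT hx
  have hne : ∀ x ∈ deletedFiberProd r m, centered (fun i => h (x i)) ≠ 0 :=
    fun x hx h0 => hdiag x hx (exists_eq_const_of_centered_eq_zero h0)
  have hcontTuple : ContinuousOn (fun x : Fin r → _ => fun i => h (x i)) (deletedFiberProd r m) :=
    continuousOn_pi.mpr fun i => hcont.comp (continuous_apply i).continuousOn fun x hx => hx.1 i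
  refine ⟨hdiag, fun x => l2Normalize (centered fun i => h (x i)), ?_, ?_, ?_⟩
  · exact continuousOn_l2Normalize.comp (continuous_centered.comp_continuousOn hcontTuple) hne
  · exact fun x hx =>
      ⟨sum_l2Normalize_eq_zero (sum_centered _), sum_norm_sq_l2Normalize (hne x hx)⟩
  · intro x _ π
    exact (congrArg l2Normalize (centered_comp_perm (fun i => h (x i)) π)).trans
      (l2Normalize_comp_perm _ π)

/-- necessity of the prismatic deleted product criterion: if
`h : C → ℝ^k` is continuous and the regular prismatic map `f = (p, h)` has no
`r`-Tverberg point, then the induced equivariant map `h̃ : X → (ℝ^k)^r`,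
`h̃(x_1,…,x_r) = (h(x_1),…,h(x_r))`, avoids the thin diagonal, and consequently there is
an `S_r`-equivariant continuous map `X → S^{m-1}`. -/
theorem statement7 (r k : ℕ) (hr : 2 ≤ r) (hk : 1 ≤ k)
    (m : ℕ) (hm : m = (r - 1) * k)
    (h : ((Fin r × Fin (m + 1)) → ℝ) → EuclideanSpace ℝ (Fin k))
    (hcont : ContinuousOn h (colorfulComplex r m))
    (hT : ¬ ∃ x : Fin r → ((Fin r × Fin (m + 1)) → ℝ),
        (∀ i, x i ∈ colorfulComplex r m) ∧
        (Pairwise fun i j => Disjoint {v | 0 < x i v} {v | 0 < x j v}) ∧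
        (∀ i j, (simplexProj r m (x i), h (x i)) = (simplexProj r m (x j), h (x j)))) :
    (∀ x ∈ deletedFiberProd r m,
        ¬ ∃ z : EuclideanSpace ℝ (Fin k), ∀ i, h (x i) = z) ∧
    (∃ F : (Fin r → ((Fin r × Fin (m + 1)) → ℝ)) → (Fin r → EuclideanSpace ℝ (Fin k)),
      ContinuousOn F (deletedFiberProd r m) ∧
      MapsTo F (deletedFiberProd r m) (blockSphere k r) ∧
      ∀ x ∈ deletedFiberProd r m, ∀ π : Equiv.Perm (Fin r),
        F (fun i => x (π i)) = fun i => F x (π i)) :=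
  statement7_general r k m h hcont hT
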